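/- For every integer m ≥ 2, every real λ > (m−1)²/4, and every ε > 0, there exists a C^∞ function υ : ℝ → ℂ with compact support contained in (0, +∞) such that ∫₀^{∞} |υ(t)|² sinh^{m−1}(t) dt > 0 and ∫₀^{∞} |υ''(t) + (m−1) coth(t) υ'(t) + λ υ(t)|² sinh^{m−1}(t) dt ≤ ε ∫₀^{∞} |υ(t)|² sinh^{m−1}(t) dt. -/

import Mathlib

open Filter Set
open scoped Real

noncomputable section

/-- The hyperbolic cotangent `coth t = cosh t / sinh t`. -/
def coth (t : ℝ) : ℝ := Real.cosh t / Real.sinh t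

/-!
Let `n = m - 1` and let `μ = -n/2 + i √(λ - n²/4)`, a root of `μ² + nμ + λ = 0` with
`2 Re μ = -n`. Then `e^{μt}` solves the limiting equation `u'' + n u' + λu = 0`, and the weight
`|e^{μt}|² sinh^n t = (e^{-t} sinh t)^n` lies between `3^{-n}` and `1` for `t ≥ 1`. Cut `e^{μt}`
off smoothly to `[R, 5R]` by `h(t/R)`, with `h = 1` on `[2, 4]`. Conjugating the operator by
`e^{μt}` leaves only terms containing a derivative of `h(t/R)`, which is `O(1/R)`, or the factor
`coth t - 1 ≤ 1/t ≤ 1/R`. Hence the numerator is `O(1/R)` while the denominator is at least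
`2R·3^{-n}`, and a large `R` does the job.
-/

open MeasureTheory
open scoped Complex

namespace Real

theorem coth_sub_one_eq {t : ℝ} (ht : 0 < t) : coth t - 1 = exp (-t) / sinh t := by
  rw [coth, div_sub_one (sinh_pos_iff.2 ht).ne', cosh_eq, sinh_eq]
  ring

theorem coth_sub_one_nonneg {t : ℝ} (ht : 0 < t) : 0 ≤ coth t - 1 := by
  rw [coth_sub_one_eq ht]
  exact div_nonneg (exp_nonneg _) (sinh_pos_iff.2 ht).le

theorem coth_sub_one_le_inv {t : ℝ} (ht : 0 < t) : coth t - 1 ≤ t⁻¹ := by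
  rw [coth_sub_one_eq ht, ← one_div]
  calc exp (-t) / sinh t ≤ 1 / sinh t :=
        div_le_div_of_nonneg_right (exp_le_one_iff.2 (by linarith)) (sinh_pos_iff.2 ht).le
    _ ≤ 1 / t := one_div_le_one_div_of_le ht (self_lt_sinh_iff.2 ht).le

theorem exp_neg_mul_sinh (t : ℝ) : exp (-t) * sinh t = (1 - exp (-(2 * t))) / 2 := by
  rw [sinh_eq, show -(2 * t) = -t + -t by ring, exp_add]
  field_simp
  rw [mul_sub, ← exp_add]
  simp [sq]

theorem exp_neg_mul_sinh_nonneg {t : ℝ} (ht : 0 ≤ t) : 0 ≤ exp (-t) * sinh t := by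
  rw [exp_neg_mul_sinh]
  linarith [exp_le_one_iff.2 (by linarith : -(2 * t) ≤ 0)]

theorem exp_neg_mul_sinh_le_one (t : ℝ) : exp (-t) * sinh t ≤ 1 := by
  rw [exp_neg_mul_sinh]
  linarith [exp_pos (-(2 * t))]

theorem one_third_le_exp_neg_mul_sinh {t : ℝ} (ht : 1 ≤ t) : 1 / 3 ≤ exp (-t) * sinh t := by
  have h3 : 3 ≤ exp 2 := by linarith [add_one_le_exp 2]
  have : exp (-(2 * t)) ≤ 1 / 3 := by
    calc exp (-(2 * t)) ≤ exp (-2) := exp_le_exp.2 (by linarith)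
      _ = (exp 2)⁻¹ := exp_neg 2
      _ ≤ 1 / 3 := by rw [← one_div]; exact one_div_le_one_div_of_le (by norm_num) h3
  rw [exp_neg_mul_sinh]
  linarith

end Real

open Real in
theorem norm_cexp_mul_sq_mul_sinh_pow {μ : ℂ} {n : ℕ} (hμ : 2 * μ.re = -n) (t : ℝ) :
    ‖cexp (μ * t)‖ ^ 2 * sinh t ^ n = (exp (-t) * sinh t) ^ n := by
  rw [mul_pow, Complex.norm_exp, ← exp_nat_mul, ← exp_nat_mul]
  congr 2
  simp only [Complex.mul_re, Complex.ofReal_re, Complex.ofReal_im, mul_zero, sub_zero]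
  push_cast
  linear_combination t * hμ

theorem exists_sq_add_mul_add_eq_zero {b c : ℝ} (h : b ^ 2 / 4 ≤ c) :
    ∃ μ : ℂ, μ ^ 2 + b * μ + c = 0 ∧ 2 * μ.re = -b := by
  refine ⟨-b / 2 + (√(c - b ^ 2 / 4) : ℝ) * Complex.I, ?_, by simp; ring⟩
  have hsq : ((√(c - b ^ 2 / 4) : ℝ) : ℂ) ^ 2 = c - b ^ 2 / 4 := by
    rw [← Complex.ofReal_pow, Real.sq_sqrt (by linarith)]; push_cast; ring
  linear_combination (-1 : ℂ) * hsq + ((√(c - b ^ 2 / 4) : ℝ) : ℂ) ^ 2 * Complex.I_sq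

theorem deriv_cexp_mul_mul (μ : ℂ) {f : ℝ → ℂ} (hf : Differentiable ℝ f) :
    deriv (fun s : ℝ => cexp (μ * s) * f s)
      = fun t : ℝ => cexp (μ * t) * (μ * f t + deriv f t) := by
  funext t
  have hexp : HasDerivAt (fun s : ℝ => cexp (μ * s)) (cexp (μ * t) * μ) t :=
    ((hasDerivAt_id (t : ℂ)).const_mul μ |>.cexp).comp_ofReal.congr_deriv (by simp)
  exact (hexp.mul (hf t).hasDerivAt).deriv.trans (by ring)

theorem deriv_deriv_cexp_mul_mul_add (μ a lam : ℂ) {f : ℝ → ℂ} (hf : ContDiff ℝ 2 f) (t : ℝ) :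
    deriv (deriv fun s : ℝ => cexp (μ * s) * f s) t
        + a * deriv (fun s : ℝ => cexp (μ * s) * f s) t + lam * (cexp (μ * t) * f t)
      = cexp (μ * t)
        * (deriv (deriv f) t + (2 * μ + a) * deriv f t + (μ ^ 2 + a * μ + lam) * f t) := by
  have hf1 : Differentiable ℝ f := hf.differentiable (by norm_num)
  have hf2 : Differentiable ℝ (deriv f) := (hf.iterate_deriv' 1 1).differentiable (by norm_num)
  have hg : Differentiable ℝ fun s => μ * f s + deriv f s := (hf1.const_mul μ).add hf2
  rw [deriv_cexp_mul_mul μ hf1, deriv_cexp_mul_mul μ hg]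
  beta_reduce
  rw [deriv_fun_add ((hf1 t).const_mul μ) (hf2 t), deriv_const_mul _ (hf1 t)]
  ring

theorem deriv_deriv_comp_mul_left {𝕜 F : Type*} [NontriviallyNormedField 𝕜] [NormedAddCommGroup F]
    [NormedSpace 𝕜 F] (c : 𝕜) (h : 𝕜 → F) (t : 𝕜) :
    deriv (deriv fun s => h (c * s)) t = c ^ 2 • deriv (deriv h) (c * t) := by
  have h1 : deriv (fun s => h (c * s)) = c • fun s => deriv h (c * s) :=
    funext (deriv_comp_mul_left c h)
  rw [h1, deriv_const_smul_field, deriv_comp_mul_left, smul_smul, sq]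

/-- For `υ t = e^{μt} h(t/R)` and `xₖ = h⁽ᵏ⁾(t/R)`, the expression bounded here is
`e^{-μt} (υ'' + n coth t · υ' + λυ)(t)`. -/
theorem norm_conjugated_radial_le {n : ℕ} {lam : ℝ} {μ : ℂ} (hμ : μ ^ 2 + n * μ + lam = 0)
    {A R t : ℝ} (hR : 1 ≤ R) (ht : R ≤ t) {x₀ x₁ x₂ : ℂ} (h₀ : ‖x₀‖ ≤ A) (h₁ : ‖x₁‖ ≤ A)
    (h₂ : ‖x₂‖ ≤ A) :
    ‖R⁻¹ ^ 2 • x₂ + (2 * μ + ((n * coth t : ℝ) : ℂ)) * R⁻¹ • x₁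
        + (μ ^ 2 + ((n * coth t : ℝ) : ℂ) * μ + lam) * x₀‖
      ≤ A * (1 + 2 * ‖μ‖ + 2 * n + n * ‖μ‖) / R := by
  have hR₀ : 0 < R := by linarith
  have hR₁ : R⁻¹ ≤ 1 := inv_le_one_of_one_le₀ hR
  set δ := coth t - 1
  have hδ₀ : 0 ≤ δ := Real.coth_sub_one_nonneg (by linarith)
  have hδR : δ ≤ R⁻¹ := (Real.coth_sub_one_le_inv (by linarith)).trans (inv_anti₀ hR₀ ht)
  have hcoth : coth t = 1 + δ := by ring
  have hcoef : μ ^ 2 + ((n * coth t : ℝ) : ℂ) * μ + lam = ((n * δ : ℝ) : ℂ) * μ := by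
    rw [hcoth]; push_cast; linear_combination hμ
  have hfirst : ‖2 * μ + ((n * coth t : ℝ) : ℂ)‖ ≤ 2 * ‖μ‖ + 2 * n := by
    calc _ ≤ ‖2 * μ‖ + ‖((n * coth t : ℝ) : ℂ)‖ := norm_add_le _ _
      _ = 2 * ‖μ‖ + n * (1 + δ) := by
        rw [norm_mul, Complex.norm_real, Real.norm_of_nonneg (by rw [hcoth]; positivity), hcoth]
        norm_num
      _ ≤ 2 * ‖μ‖ + 2 * n := by nlinarith [n.cast_nonneg (α := ℝ)]
  rw [hcoef]
  calc _ ≤ ‖R⁻¹ ^ 2 • x₂‖ + ‖(2 * μ + ((n * coth t : ℝ) : ℂ)) * R⁻¹ • x₁‖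
          + ‖((n * δ : ℝ) : ℂ) * μ * x₀‖ := norm_add₃_le
    _ = R⁻¹ * R⁻¹ * ‖x₂‖ + ‖2 * μ + ((n * coth t : ℝ) : ℂ)‖ * (R⁻¹ * ‖x₁‖)
          + n * δ * ‖μ‖ * ‖x₀‖ := by
        simp only [norm_smul, norm_mul, Complex.norm_real, Real.norm_of_nonneg hδ₀,
          Real.norm_of_nonneg (inv_nonneg.2 hR₀.le), norm_pow, RCLike.norm_natCast]
        ring
    _ ≤ R⁻¹ * 1 * A + (2 * ‖μ‖ + 2 * n) * (R⁻¹ * A) + n * R⁻¹ * ‖μ‖ * A := by gcongr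
    _ = A * (1 + 2 * ‖μ‖ + 2 * n + n * ‖μ‖) / R := by ring

theorem integral_Ioi_zero_indicator_Icc {a b : ℝ} (ha : 0 < a) (hab : a ≤ b) (C : ℝ) :
    ∫ t in Ioi 0, (Icc a b).indicator (fun _ => C) t = (b - a) * C := by
  rw [integral_indicator measurableSet_Icc, Measure.restrict_restrict measurableSet_Icc,
    inter_eq_left.2 ((Icc_subset_Ioi_iff hab).2 ha), setIntegral_const, measureReal_def,
    Real.volume_Icc, ENNReal.toReal_ofReal (by linarith), smul_eq_mul]

theorem setIntegral_Ioi_zero_le_of_le_on_Icc {F : ℝ → ℝ} {a b C : ℝ} (ha : 0 < a) (hab : a ≤ b)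
    (hF : ∀ t ∈ Icc a b, 0 ≤ F t ∧ F t ≤ C) (hF0 : ∀ t ∉ Icc a b, F t = 0) :
    ∫ t in Ioi 0, F t ≤ (b - a) * C := by
  rw [← integral_Ioi_zero_indicator_Icc ha hab]
  have hind : Integrable ((Icc a b).indicator fun _ => C) (volume.restrict (Ioi 0)) :=
    (integrable_indicator_iff measurableSet_Icc).2
      (integrableOn_const (measure_Icc_lt_top.trans_le' (Measure.restrict_le_self _)).ne)
  refine integral_mono_of_nonneg (Eventually.of_forall fun t => ?_) hind
    (Eventually.of_forall fun t => ?_)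
  all_goals
    by_cases ht : t ∈ Icc a b
    · simp [indicator_of_mem ht, hF t ht]
    · simp [indicator_of_notMem ht, hF0 t ht]

theorem le_setIntegral_Ioi_zero_of_le_on_Icc {F : ℝ → ℝ} {a b c : ℝ} (ha : 0 < a) (hab : a ≤ b)
    (hc : 0 ≤ c) (hFi : Integrable F) (hF : ∀ t ∈ Ioi 0, 0 ≤ F t)
    (hcF : ∀ t ∈ Icc a b, c ≤ F t) :
    (b - a) * c ≤ ∫ t in Ioi 0, F t := by
  rw [← integral_Ioi_zero_indicator_Icc ha hab]
  refine integral_mono_of_nonneg ((ae_restrict_iff' measurableSet_Ioi).2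
    (Eventually.of_forall fun t _ => indicator_nonneg (fun _ _ => hc) t)) hFi.integrableOn
    ((ae_restrict_iff' measurableSet_Ioi).2 (Eventually.of_forall fun t ht => ?_))
  by_cases ht' : t ∈ Icc a b
  · simpa [indicator_of_mem ht'] using hcF t ht'
  · simpa [indicator_of_notMem ht'] using hF t ht

theorem exists_contDiff_tsupport_subset_Icc_eqOn_one :
    ∃ h : ℝ → ℂ, ContDiff ℝ (⊤ : ℕ∞) h ∧ tsupport h ⊆ Icc 1 5 ∧ EqOn h 1 (Icc 2 4) := by
  let f : ContDiffBump (3 : ℝ) := ⟨1, 2, one_pos, one_lt_two⟩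
  refine ⟨fun x => (f x : ℂ), Complex.ofRealCLM.contDiff.comp f.contDiff, ?_, fun x hx => ?_⟩
  · refine (tsupport_comp_subset Complex.ofReal_zero f).trans ?_
    rw [f.tsupport_eq, Real.closedBall_eq_Icc]
    norm_num [f]
  · have : x ∈ Metric.closedBall (3 : ℝ) f.rIn := by
      rw [Real.closedBall_eq_Icc]; norm_num [f]; exact hx
    simp [f.one_of_mem_closedBall this]

theorem exists_bound_norm_deriv_deriv {F : Type*} [NormedAddCommGroup F] [NormedSpace ℝ F]
    {h : ℝ → F} (hh : ContDiff ℝ 2 h) (hc : HasCompactSupport h) :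
    ∃ A, ∀ x, ‖h x‖ ≤ A ∧ ‖deriv h x‖ ≤ A ∧ ‖deriv (deriv h) x‖ ≤ A := by
  obtain ⟨A₀, hA₀⟩ := hc.exists_bound_of_continuous hh.continuous
  obtain ⟨A₁, hA₁⟩ := hc.deriv.exists_bound_of_continuous (hh.continuous_deriv (by norm_num))
  obtain ⟨A₂, hA₂⟩ := hc.deriv.deriv.exists_bound_of_continuous
    ((hh.iterate_deriv' 1 1).continuous_deriv (by norm_num))
  exact ⟨max A₀ (max A₁ A₂), fun x => ⟨(hA₀ x).trans (le_max_left _ _),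
    (hA₁ x).trans ((le_max_left _ _).trans (le_max_right _ _)),
    (hA₂ x).trans ((le_max_right _ _).trans (le_max_right _ _))⟩⟩

theorem apply_inv_mul_eq_zero_of_notMem_Icc {F : Type*} [Zero F] {h : ℝ → F} {a b R t : ℝ}
    (hR : 0 < R) (hsupp : tsupport h ⊆ Icc a b) (ht : t ∉ Icc (R * a) (R * b)) :
    h (R⁻¹ * t) = 0 := by
  refine image_eq_zero_of_notMem_tsupport fun hmem => ht ?_
  obtain ⟨h₁, h₂⟩ := hsupp hmem
  rw [inv_mul_eq_div, le_div_iff₀ hR, div_le_iff₀ hR] at *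
  constructor <;> linarith

def weylTrial (μ : ℂ) (h : ℝ → ℂ) (R t : ℝ) : ℂ := cexp (μ * t) * h (R⁻¹ * t)

theorem contDiff_weylTrial (μ : ℂ) {h : ℝ → ℂ} {k : WithTop ℕ∞} (hh : ContDiff ℝ k h) (R : ℝ) :
    ContDiff ℝ k (weylTrial μ h R) :=
  (Complex.contDiff_exp.comp (contDiff_const.mul Complex.ofRealCLM.contDiff)).mul
    (hh.comp (contDiff_const.mul contDiff_id))

theorem tsupport_weylTrial_subset (μ : ℂ) {h : ℝ → ℂ} {a b R : ℝ} (hR : 0 < R)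
    (hsupp : tsupport h ⊆ Icc a b) : tsupport (weylTrial μ h R) ⊆ Icc (R * a) (R * b) :=
  closure_minimal (fun t ht => by_contra fun hnot => ht (by
    simp [weylTrial, apply_inv_mul_eq_zero_of_notMem_Icc hR hsupp hnot])) isClosed_Icc

theorem hasCompactSupport_weylTrial (μ : ℂ) {h : ℝ → ℂ} {a b R : ℝ} (hR : 0 < R)
    (hsupp : tsupport h ⊆ Icc a b) : HasCompactSupport (weylTrial μ h R) :=
  isCompact_Icc.of_isClosed_subset (isClosed_tsupport _) (tsupport_weylTrial_subset μ hR hsupp)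

theorem setIntegral_norm_radial_weylTrial_le {n : ℕ} {lam : ℝ} {μ : ℂ}
    (hμ : μ ^ 2 + n * μ + lam = 0) (hre : 2 * μ.re = -n) {h : ℝ → ℂ} (hh : ContDiff ℝ 2 h)
    (hsupp : tsupport h ⊆ Icc 1 5) {A R : ℝ}
    (hA : ∀ x, ‖h x‖ ≤ A ∧ ‖deriv h x‖ ≤ A ∧ ‖deriv (deriv h) x‖ ≤ A) (hR : 1 ≤ R) :
    ∫ t in Ioi 0, ‖deriv (deriv (weylTrial μ h R)) t
          + ((n * coth t : ℝ) : ℂ) * deriv (weylTrial μ h R) t + lam * weylTrial μ h R t‖ ^ 2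
        * Real.sinh t ^ n
      ≤ 4 * (A * (1 + 2 * ‖μ‖ + 2 * n + n * ‖μ‖)) ^ 2 / R := by
  set K := A * (1 + 2 * ‖μ‖ + 2 * n + n * ‖μ‖)
  have hR₀ : 0 < R := by linarith
  have hconj (t : ℝ) : deriv (deriv (weylTrial μ h R)) t
        + ((n * coth t : ℝ) : ℂ) * deriv (weylTrial μ h R) t + lam * weylTrial μ h R t
      = cexp (μ * t) * (R⁻¹ ^ 2 • deriv (deriv h) (R⁻¹ * t)
        + (2 * μ + ((n * coth t : ℝ) : ℂ)) * R⁻¹ • deriv h (R⁻¹ * t)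
        + (μ ^ 2 + ((n * coth t : ℝ) : ℂ) * μ + lam) * h (R⁻¹ * t)) := by
    have hψ : ContDiff ℝ 2 fun s => h (R⁻¹ * s) := hh.comp (contDiff_const.mul contDiff_id)
    rw [show weylTrial μ h R = fun s : ℝ => cexp (μ * s) * h (R⁻¹ * s) from rfl,
      deriv_deriv_cexp_mul_mul_add μ _ _ hψ, deriv_deriv_comp_mul_left, deriv_comp_mul_left]
  refine (setIntegral_Ioi_zero_le_of_le_on_Icc (a := R * 1) (b := R * 5) (C := (K / R) ^ 2)
    (by linarith) (by linarith) (fun t ht => ?_) (fun t ht => ?_)).trans_eq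
    (by field_simp; ring)
  · have ht₀ : 0 ≤ t := by linarith [ht.1]
    rw [hconj t, norm_mul, mul_pow, mul_right_comm, norm_cexp_mul_sq_mul_sinh_pow hre]
    have hw₀ := Real.exp_neg_mul_sinh_nonneg ht₀
    refine ⟨by positivity, ?_⟩
    obtain ⟨hA₀, hA₁, hA₂⟩ := hA (R⁻¹ * t)
    have hQ := norm_conjugated_radial_le hμ hR (t := t) (by linarith [ht.1]) hA₀ hA₁ hA₂
    calc _ ≤ 1 * (K / R) ^ 2 :=
          mul_le_mul (pow_le_one₀ hw₀ (Real.exp_neg_mul_sinh_le_one t))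
            (pow_le_pow_left₀ (norm_nonneg _) hQ 2) (by positivity) zero_le_one
      _ = (K / R) ^ 2 := one_mul _
  · have hsupp₁ := tsupport_deriv_subset.trans hsupp
    rw [hconj t, apply_inv_mul_eq_zero_of_notMem_Icc hR₀ hsupp ht,
      apply_inv_mul_eq_zero_of_notMem_Icc hR₀ hsupp₁ ht,
      apply_inv_mul_eq_zero_of_notMem_Icc hR₀ (tsupport_deriv_subset.trans hsupp₁) ht]
    simp

theorem le_setIntegral_norm_sq_weylTrial {n : ℕ} {μ : ℂ} (hre : 2 * μ.re = -n) {h : ℝ → ℂ}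
    (hh : Continuous h) (hsupp : tsupport h ⊆ Icc 1 5) (hone : EqOn h 1 (Icc 2 4)) {R : ℝ}
    (hR : 1 ≤ R) :
    2 * R * (1 / 3) ^ n ≤ ∫ t in Ioi 0, ‖weylTrial μ h R t‖ ^ 2 * Real.sinh t ^ n := by
  have hR₀ : 0 < R := by linarith
  have hint : Integrable fun t => ‖weylTrial μ h R t‖ ^ 2 * Real.sinh t ^ n :=
    Continuous.integrable_of_hasCompactSupport (by unfold weylTrial; fun_prop)
      ((hasCompactSupport_weylTrial μ hR₀ hsupp).mono fun t ht hυt => ht (by simp [hυt]))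
  refine (le_setIntegral_Ioi_zero_of_le_on_Icc (a := R * 2) (b := R * 4) (c := (1 / 3) ^ n)
    (by positivity) (by linarith) (by positivity) hint (fun t ht => ?_) (fun t ht => ?_)).trans_eq'
    (by ring)
  · have := Real.sinh_pos_iff.2 ht
    positivity
  · have hmem : R⁻¹ * t ∈ Icc 2 4 := by
      rw [mem_Icc, inv_mul_eq_div, le_div_iff₀ hR₀, div_le_iff₀ hR₀]
      constructor <;> linarith [ht.1, ht.2]
    rw [weylTrial, hone hmem, Pi.one_apply, mul_one, norm_cexp_mul_sq_mul_sinh_pow hre]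
    exact pow_le_pow_left₀ (by norm_num) (Real.one_third_le_exp_neg_mul_sinh (by linarith [ht.1])) _

/-- for every integer `m ≥ 2`, every real `λ > (m−1)²/4` and every `ε > 0`,
there is a smooth compactly supported `υ : ℝ → ℂ` with support in `(0, +∞)` such that
`∫₀^∞ |υ|² sinh^{m−1} > 0` and
`∫₀^∞ |υ'' + (m−1) coth(t) υ' + λυ|² sinh^{m−1} ≤ ε ∫₀^∞ |υ|² sinh^{m−1}`. -/
theorem statement17
    (m : ℕ) (hm : 2 ≤ m) (lam : ℝ) (hlam : ((m : ℝ) - 1) ^ 2 / 4 < lam)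
    (ε : ℝ) (hε : 0 < ε) :
    ∃ υ : ℝ → ℂ, ContDiff ℝ (⊤ : ℕ∞) υ ∧ HasCompactSupport υ ∧ tsupport υ ⊆ Set.Ioi 0 ∧
      (0 < ∫ t in Set.Ioi (0 : ℝ), ‖υ t‖ ^ 2 * Real.sinh t ^ (m - 1)) ∧
      (∫ t in Set.Ioi (0 : ℝ),
          ‖deriv (deriv υ) t + ((((m : ℝ) - 1) * coth t : ℝ) : ℂ) * deriv υ t
            + (lam : ℂ) * υ t‖ ^ 2 * Real.sinh t ^ (m - 1))
        ≤ ε * ∫ t in Set.Ioi (0 : ℝ), ‖υ t‖ ^ 2 * Real.sinh t ^ (m - 1) := by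
  obtain ⟨h, hh, hsupp, hone⟩ := exists_contDiff_tsupport_subset_Icc_eqOn_one
  have hh₂ : ContDiff ℝ 2 h := hh.of_le (WithTop.coe_le_coe.2 le_top)
  obtain ⟨A, hA⟩ := exists_bound_norm_deriv_deriv hh₂
    (isCompact_Icc.of_isClosed_subset (isClosed_tsupport h) hsupp)
  set n := m - 1
  have hn : (m : ℝ) - 1 = n := by rw [Nat.cast_sub (by omega), Nat.cast_one]
  obtain ⟨μ, hμ, hre⟩ := exists_sq_add_mul_add_eq_zero (b := n) (c := lam) (hn ▸ hlam.le)
  set K := A * (1 + 2 * ‖μ‖ + 2 * n + n * ‖μ‖)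
  set c : ℝ := (1 / 3) ^ n
  set R := max 1 (2 * K ^ 2 / (ε * c))
  have hR : 1 ≤ R := le_max_left _ _
  have hR₀ : 0 < R := by linarith
  have hden := le_setIntegral_norm_sq_weylTrial hre hh.continuous hsupp hone hR
  refine ⟨weylTrial μ h R, contDiff_weylTrial μ hh R, hasCompactSupport_weylTrial μ hR₀ hsupp,
    (tsupport_weylTrial_subset μ hR₀ hsupp).trans fun t ht => mem_Ioi.2 (by linarith [ht.1]),
    lt_of_lt_of_le (by positivity) hden, ?_⟩
  have hRK : 4 * K ^ 2 / R ≤ ε * (2 * R * c) := by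
    have := le_max_right 1 (2 * K ^ 2 / (ε * c))
    rw [div_le_iff₀ (by positivity)] at this
    rw [div_le_iff₀ (by linarith)]
    nlinarith
  rw [hn]
  calc _ ≤ 4 * K ^ 2 / R := setIntegral_norm_radial_weylTrial_le hμ hre hh₂ hsupp hA hR
    _ ≤ ε * (2 * R * c) := hRK
    _ ≤ _ := by gcongr
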